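/- arXiv:2404.00035 — 2 statements merged into one kernel-verified Lean document; each statement's English description precedes it below -/
import Mathlib

section
/- For the bivariate Hermite–Konhauser Mittag-Leffler function E_{ρ,Υ}^{(γ₁;γ₂;γ₃)}(X,Y) = ∑_{s≥0} ∑_{r≥0} (γ₁)_{2s}(γ₂)_{s+r} X^s Y^{Υr} / ((γ₃)_s Γ(ρ+Υr) r! s!), one has the relation ₖH_n^ρ(X,Y) = (2X)^n E_{ρ+1,Υ}^{(-n;-n;-n)}(-1/(4X²), Y) for X ≠ 0. -/
/-- The Pochhammer (rising factorial) symbol. -/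
noncomputable def poch (a : ℂ) (k : ℕ) : ℂ := ∏ i ∈ Finset.range k, (a + i)

/-- The bivariate Hermite–Konhauser Mittag-Leffler function
`E_{ρ,Υ}^{(γ₁;γ₂;γ₃)}(X,Y)`. -/
noncomputable def mlE3 (ρ : ℂ) (Υ : ℕ) (γ1 γ2 γ3 X Y : ℂ) : ℂ :=
  ∑' s : ℕ, ∑' r : ℕ,
    poch γ1 (2 * s) * poch γ2 (s + r) * X ^ s * Y ^ (Υ * r) /
      (poch γ3 s * Complex.Gamma (ρ + (Υ : ℂ) * r) * (r.factorial : ℂ) * (s.factorial : ℂ))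

/-- The 2D Hermite–Konhauser polynomial `ₖH_n^ρ(X,Y)`. -/
noncomputable def hermiteKonhauser (ρ : ℝ) (Υ n : ℕ) (X Y : ℂ) : ℂ :=
  ∑ s ∈ Finset.range (n / 2 + 1), ∑ r ∈ Finset.range (n - s + 1),
    ((-1) ^ s * poch (-(n : ℂ)) (2 * s) * poch (-(n : ℂ)) (s + r)) /
      (poch (-(n : ℂ)) s * Complex.Gamma ((ρ : ℂ) + 1 + (Υ : ℂ) * r) *
        (s.factorial : ℂ) * (r.factorial : ℂ)) *
      (2 * X) ^ (n - 2 * s) * Y ^ (Υ * r)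

lemma poch_neg_nat_eq_zero (n k : ℕ) (h : n < k) : poch (-(n : ℂ)) k = 0 := by
  apply Finset.prod_eq_zero (Finset.mem_range.2 h)
  simp

/-- `ₖH_n^ρ(X,Y) = (2X)^n E_{ρ+1,Υ}^{(-n;-n;-n)}(-1/(4X²), Y)` for `X ≠ 0`. -/
theorem hermiteKonhauser_eq_mlE3 (ρ : ℝ) (hρ : -1 < ρ) (Υ : ℕ) (hΥ : 0 < Υ)
    (n : ℕ) (X Y : ℂ) (hX : X ≠ 0) :
    hermiteKonhauser ρ Υ n X Y =
      (2 * X) ^ n *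
        mlE3 ((ρ : ℂ) + 1) Υ (-(n : ℂ)) (-(n : ℂ)) (-(n : ℂ)) (-1 / (4 * X ^ 2)) Y := by
  rw [hermiteKonhauser, mlE3]
  have houter :
      (∑' s : ℕ, ∑' r : ℕ,
        poch (-(n : ℂ)) (2 * s) * poch (-(n : ℂ)) (s + r) * (-1 / (4 * X ^ 2)) ^ s *
          Y ^ (Υ * r) /
          (poch (-(n : ℂ)) s * Complex.Gamma ((ρ : ℂ) + 1 + (Υ : ℂ) * r) *
            (r.factorial : ℂ) * (s.factorial : ℂ)))
      = ∑ s ∈ Finset.range (n / 2 + 1), ∑ r ∈ Finset.range (n - s + 1),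
        poch (-(n : ℂ)) (2 * s) * poch (-(n : ℂ)) (s + r) * (-1 / (4 * X ^ 2)) ^ s *
          Y ^ (Υ * r) /
          (poch (-(n : ℂ)) s * Complex.Gamma ((ρ : ℂ) + 1 + (Υ : ℂ) * r) *
            (r.factorial : ℂ) * (s.factorial : ℂ)) := by
    rw [tsum_eq_sum (s := Finset.range (n / 2 + 1))]
    · refine Finset.sum_congr rfl fun s hs => ?_
      rw [tsum_eq_sum (s := Finset.range (n - s + 1))]
      intro r hr
      have hsr : n < s + r := by
        have := Finset.mem_range.not.1 hr
        omega
      rw [poch_neg_nat_eq_zero n (s + r) hsr]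
      simp
    · intro s hs
      have h2s : n < 2 * s := by
        have := Finset.mem_range.not.1 hs
        omega
      have : poch (-(n : ℂ)) (2 * s) = 0 := poch_neg_nat_eq_zero n (2 * s) h2s
      simp [this]
  rw [houter, Finset.mul_sum]
  refine Finset.sum_congr rfl fun s hs => ?_
  rw [Finset.mul_sum]
  refine Finset.sum_congr rfl fun r hr => ?_
  have hs' : 2 * s ≤ n := by
    have := Finset.mem_range.1 hs
    omega
  have h2X : (2 : ℂ) * X ≠ 0 := by
    simp [hX]
  have hpow : (2 * X) ^ n = (2 * X) ^ (n - 2 * s) * (2 * X) ^ (2 * s) := by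
    rw [← pow_add]
    congr 1
    omega
  have hXs : ((-1 : ℂ) / (4 * X ^ 2)) ^ s = (-1 : ℂ) ^ s / (2 * X) ^ (2 * s) := by
    rw [div_pow, pow_mul]
    norm_num
    ring_nf
  rw [hpow, hXs]
  set A := poch (-(n : ℂ)) (2 * s)
  set B := poch (-(n : ℂ)) (s + r)
  set C := poch (-(n : ℂ)) s
  set G := Complex.Gamma ((ρ : ℂ) + 1 + (Υ : ℂ) * r)
  set Q := (2 * X) ^ (2 * s) with hQ
  have hne : Q ≠ 0 := pow_ne_zero _ h2X
  have hcancel : Q * ((-1 : ℂ) ^ s / Q) = (-1) ^ s := by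
    field_simp
  generalize hc : (-1 : ℂ) ^ s / Q = c at *
  linear_combination
    (-(2 * X) ^ (n - 2 * s) * A * B * Y ^ (Υ * r) /
      (C * G * (r.factorial : ℂ) * (s.factorial : ℂ))) * hcancel
end

section
/- For Re(μ) > 0, Re(ζ) > 0, Re(κ) > 0, Re(ρ) > 0, the double Riemann–Liouville fractional integral (I^ζ in Y from B, composed with I^μ in X from A) applied to (X−A)^{κ−1}(Y−B)^{ρ−1} E_{κ,ρ,Υ}^{(γ₁;γ₂;γ₃;γ₄)}(ϖ₁(X−A), ϖ₂(Y−B)) equals (X−A)^{κ+μ−1}(Y−B)^{ρ+ζ−1} E_{κ+μ,ρ+ζ,Υ}^{(γ₁;γ₂;γ₃;γ₄)}(ϖ₁(X−A), ϖ₂(Y−B)). -/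
/-!
Write `E_{κ,ρ,Υ}` as the double series `∑ b(s,r) X^s Y^{Υr} / (Γ(κ+s) Γ(ρ+Υr))`. The
Riemann–Liouville integral of order `μ` from `a` sends `(t-a)^{κ+s-1}/Γ(κ+s)` to
`(x-a)^{κ+μ+s-1}/Γ(κ+μ+s)` (a Beta integral), so integrating term by term, first in `X` and then
in `Y`, only shifts `κ ↦ κ+μ` and `ρ ↦ ρ+ζ`. The exchange of integral and sum is dominated
convergence: `b(s,r)` grows at most exponentially, so the series converges absolutely everywhere.
-/

open MeasureTheory

/-- The modified bivariate Hermite–Konhauser Mittag-Leffler function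
`E_{κ,ρ,Υ}^{(γ₁;γ₂;γ₃;γ₄)}(X,Y)`. -/
noncomputable def mlE4 (κ ρ : ℂ) (Υ : ℕ) (γ1 γ2 γ3 γ4 X Y : ℂ) : ℂ :=
  ∑' s : ℕ, ∑' r : ℕ,
    poch γ1 (2 * s) * poch γ2 (s + r) * X ^ s * Y ^ (Υ * r) /
      (poch γ3 s * poch γ4 s * Complex.Gamma (κ + s) * Complex.Gamma (ρ + (Υ : ℂ) * r) *
        (r.factorial : ℂ) * (s.factorial : ℂ))

open Finset Nat
open scoped Interval

lemma factorial_add_le_two_pow_mul (m n : ℕ) : (m + n)! ≤ 2 ^ (m + n) * m ! * n ! := by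
  rw [← Nat.add_choose_mul_factorial_mul_factorial m n]
  gcongr
  exact Nat.choose_le_two_pow _ _

lemma norm_poch_le (γ : ℂ) (n : ℕ) : ‖poch γ n‖ ≤ (‖γ‖ + 1) ^ n * n ! := by
  calc ‖poch γ n‖ = ∏ i ∈ range n, ‖γ + i‖ := norm_prod _ _
    _ ≤ ∏ i ∈ range n, ((‖γ‖ + 1) * ((i : ℝ) + 1)) := by
      refine prod_le_prod (fun _ _ => norm_nonneg _) fun i _ => ?_
      have := norm_add_le γ i
      rw [Complex.norm_natCast] at this
      nlinarith [norm_nonneg γ, (i.cast_nonneg : (0 : ℝ) ≤ i)]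
    _ = (‖γ‖ + 1) ^ n * n ! := by
      rw [prod_mul_distrib, prod_const, card_range, ← prod_range_add_one_eq_factorial]
      push_cast
      rfl

lemma norm_poch_add_le (γ : ℂ) (m n : ℕ) :
    ‖poch γ (m + n)‖ ≤ (2 * (‖γ‖ + 1)) ^ (m + n) * m ! * n ! := by
  have : ((m + n)! : ℝ) ≤ 2 ^ (m + n) * m ! * n ! := by
    exact_mod_cast factorial_add_le_two_pow_mul m n
  calc ‖poch γ (m + n)‖ ≤ (‖γ‖ + 1) ^ (m + n) * (m + n)! := norm_poch_le γ _
    _ ≤ (‖γ‖ + 1) ^ (m + n) * (2 ^ (m + n) * m ! * n !) := by gcongr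
    _ = _ := by rw [mul_pow]; ring

lemma exists_pos_le_prod_range {q : ℕ → ℝ} (hq : ∀ i, 0 ≤ q i) {N : ℕ}
    (hN : ∀ i, N ≤ i → 1 ≤ q i) :
    ∃ c > 0, ∀ n, (∀ i < n, q i ≠ 0) → c ≤ ∏ i ∈ range n, q i := by
  induction N generalizing q with
  | zero => exact ⟨1, one_pos, fun n _ => Finset.one_le_prod fun i _ => hN i i.zero_le⟩
  | succ N ih =>
    obtain ⟨c, hc, hcq⟩ :=
      ih (q := fun i => q (i + 1)) (fun i => hq _) fun i hi => hN _ (by omega)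
    have hc1 : c ≤ 1 := by simpa using hcq 0 (by simp)
    by_cases h0 : q 0 = 0
    · refine ⟨c, hc, fun n hn => ?_⟩
      cases n with
      | zero => simpa using hc1
      | succ k => exact absurd h0 (hn 0 k.succ_pos)
    · have hq0 : 0 < min (q 0) 1 := lt_min ((hq 0).lt_of_ne' h0) one_pos
      refine ⟨c * min (q 0) 1, mul_pos hc hq0, fun n hn => ?_⟩
      cases n with
      | zero => simpa using mul_le_one₀ hc1 hq0.le (min_le_right _ _)
      | succ k =>
        rw [prod_range_succ']
        exact mul_le_mul (hcq k fun i hi => hn _ (by omega)) (min_le_left _ _) hq0.le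
          (prod_nonneg fun i _ => hq _)

lemma exists_pos_mul_factorial_le_norm_poch (γ : ℂ) :
    ∃ c > 0, ∀ n, poch γ n ≠ 0 → c * n ! ≤ 2 ^ n * ‖poch γ n‖ := by
  obtain ⟨c, hc, hcq⟩ := exists_pos_le_prod_range
    (q := fun i : ℕ => 2 * ‖γ + i‖ / (i + 1)) (fun i => by positivity)
    (N := ⌈2 * ‖γ‖ + 1⌉₊) fun i hi => by
      have hi : 2 * ‖γ‖ + 1 ≤ i := Nat.ceil_le.mp hi
      have := norm_add_le (γ + i) (-γ)
      rw [add_neg_cancel_comm, Complex.norm_natCast, norm_neg] at this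
      rw [le_div_iff₀ (by positivity)]
      linarith
  refine ⟨c, hc, fun n hn => ?_⟩
  have hprod :
      ∏ i ∈ range n, (2 * ‖γ + i‖ / ((i : ℝ) + 1)) = 2 ^ n * ‖poch γ n‖ / n ! := by
    rw [prod_div_distrib, prod_mul_distrib, prod_const, card_range, poch, norm_prod,
      ← prod_range_add_one_eq_factorial]
    push_cast
    rfl
  have hfac : ∀ i < n, γ + i ≠ 0 := fun i hi h => hn (prod_eq_zero (mem_range.mpr hi) h)
  have := hcq n fun i hi => by simpa [hfac i hi] using Nat.cast_add_one_ne_zero i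
  rwa [hprod, le_div_iff₀ (by positivity)] at this

lemma norm_Gamma_add_nat_ge {a : ℂ} (ha : 0 < a.re) (n : ℕ) :
    ‖Complex.Gamma a‖ * min a.re 1 ^ n * n ! ≤ ‖Complex.Gamma (a + n)‖ := by
  induction n with
  | zero => simp
  | succ n ih =>
    have hre : min a.re 1 * (n + 1) ≤ (a + n).re := by
      simp only [Complex.add_re, Complex.natCast_re]
      nlinarith [min_le_left a.re 1, min_le_right a.re 1, (n.cast_nonneg : (0 : ℝ) ≤ n)]
    have hne : a + n ≠ 0 := fun h => by
      rw [h, Complex.zero_re] at hre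
      nlinarith [lt_min ha one_pos]
    rw [Nat.cast_succ, ← add_assoc, Complex.Gamma_add_one _ hne, norm_mul]
    calc ‖Complex.Gamma a‖ * min a.re 1 ^ (n + 1) * ((n + 1)! : ℝ)
        = ‖Complex.Gamma a‖ * min a.re 1 ^ n * n ! * (min a.re 1 * (n + 1)) := by
          push_cast [Nat.factorial_succ]
          ring
      _ ≤ ‖Complex.Gamma (a + n)‖ * ‖a + n‖ :=
          mul_le_mul ih (hre.trans (Complex.re_le_norm _)) (by positivity) (norm_nonneg _)
      _ = _ := mul_comm _ _

lemma norm_Gamma_add_nat_mul_ge {a : ℂ} (ha : 0 < a.re) {m : ℕ} (hm : 0 < m)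
    (r : ℕ) :
    ‖Complex.Gamma a‖ * (min a.re 1 ^ m) ^ r * r ! ≤ ‖Complex.Gamma (a + ↑(m * r))‖ := by
  refine le_trans ?_ (norm_Gamma_add_nat_ge ha (m * r))
  rw [← pow_mul]
  gcongr
  exact Nat.le_mul_of_pos_left r hm

noncomputable def mlCoeff (γ1 γ2 γ3 γ4 : ℂ) (p : ℕ × ℕ) : ℂ :=
  poch γ1 (2 * p.1) * poch γ2 (p.1 + p.2) / (poch γ3 p.1 * poch γ4 p.1 * p.2 ! * p.1 !)

noncomputable def mlTerm (b : ℕ × ℕ → ℂ) (κ ρ : ℂ) (Υ : ℕ) (x y : ℂ) (p : ℕ × ℕ) : ℂ :=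
  b p * x ^ p.1 * y ^ (Υ * p.2) /
    (Complex.Gamma (κ + p.1) * Complex.Gamma (ρ + ↑(Υ * p.2)))

lemma exists_norm_mlCoeff_le (γ1 γ2 γ3 γ4 : ℂ) :
    ∃ C A B : ℝ, 0 ≤ A ∧ 0 ≤ B ∧
      ∀ p, ‖mlCoeff γ1 γ2 γ3 γ4 p‖ ≤ C * A ^ p.1 * B ^ p.2 := by
  obtain ⟨c3, hc3, hp3⟩ := exists_pos_mul_factorial_le_norm_poch γ3
  obtain ⟨c4, hc4, hp4⟩ := exists_pos_mul_factorial_le_norm_poch γ4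
  obtain ⟨K1, hK1, hγ1⟩ :
      ∃ K ≥ 0, ∀ m n, ‖poch γ1 (m + n)‖ ≤ K ^ (m + n) * m ! * n ! :=
    ⟨_, by positivity, norm_poch_add_le γ1⟩
  obtain ⟨K2, hK2, hγ2⟩ :
      ∃ K ≥ 0, ∀ m n, ‖poch γ2 (m + n)‖ ≤ K ^ (m + n) * m ! * n ! :=
    ⟨_, by positivity, norm_poch_add_le γ2⟩
  refine ⟨(c3 * c4)⁻¹, 4 * K1 ^ 2 * K2, K2, by positivity, by positivity, fun ⟨s, r⟩ => ?_⟩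
  by_cases h34 : poch γ3 s = 0 ∨ poch γ4 s = 0
  · have : mlCoeff γ1 γ2 γ3 γ4 (s, r) = 0 := by
      rcases h34 with h | h <;> simp [mlCoeff, h]
    rw [this, norm_zero]
    positivity
  push Not at h34
  have hnum : ‖poch γ1 (2 * s) * poch γ2 (s + r)‖ ≤
      K1 ^ (2 * s) * K2 ^ (s + r) * s ! ^ 3 * r ! := by
    rw [norm_mul, two_mul]
    calc ‖poch γ1 (s + s)‖ * ‖poch γ2 (s + r)‖
        ≤ (K1 ^ (s + s) * s ! * s !) * (K2 ^ (s + r) * s ! * r !) :=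
          mul_le_mul (hγ1 s s) (hγ2 s r) (norm_nonneg _) (by positivity)
      _ = _ := by ring
  have hden : (c3 * s !) * (c4 * s !) * r ! * s ! / 4 ^ s ≤
      ‖poch γ3 s * poch γ4 s * (r ! : ℂ) * (s ! : ℂ)‖ := by
    rw [div_le_iff₀ (by positivity), norm_mul, norm_mul, norm_mul, Complex.norm_natCast,
      Complex.norm_natCast]
    calc (c3 * s !) * (c4 * s !) * r ! * s !
        ≤ (2 ^ s * ‖poch γ3 s‖) * (2 ^ s * ‖poch γ4 s‖) * r ! * s ! := by
          gcongr ?_ * ?_ * _ * _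
          exacts [hp3 s h34.1, hp4 s h34.2]
      _ = _ := by
          rw [show (4 : ℝ) ^ s = 2 ^ s * 2 ^ s by rw [← mul_pow]; norm_num]
          ring
  rw [mlCoeff, norm_div]
  refine (div_le_div₀ (by positivity) hnum (by positivity) hden).trans_eq ?_
  field_simp
  ring

lemma summable_norm_mlTerm {b : ℕ × ℕ → ℂ} {C A B : ℝ} (hA : 0 ≤ A) (hB : 0 ≤ B)
    (hb : ∀ p, ‖b p‖ ≤ C * A ^ p.1 * B ^ p.2) {Υ : ℕ} (hΥ : 0 < Υ) {κ ρ : ℂ}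
    (hκ : 0 < κ.re) (hρ : 0 < ρ.re) (x y : ℂ) :
    Summable fun p => ‖mlTerm b κ ρ Υ x y p‖ := by
  have he1 : 0 < min κ.re 1 := lt_min hκ one_pos
  have he2 : 0 < min ρ.re 1 := lt_min hρ one_pos
  have hGκ : 0 < ‖Complex.Gamma κ‖ := norm_pos_iff.2 (Complex.Gamma_ne_zero_of_re_pos hκ)
  have hGρ : 0 < ‖Complex.Gamma ρ‖ := norm_pos_iff.2 (Complex.Gamma_ne_zero_of_re_pos hρ)
  have hC : 0 ≤ C := by simpa using (norm_nonneg _).trans (hb (0, 0))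
  have hU := Real.summable_pow_div_factorial (A * ‖x‖ / min κ.re 1)
  have hV := Real.summable_pow_div_factorial (B * ‖y‖ ^ Υ / min ρ.re 1 ^ Υ)
  refine .of_nonneg_of_le (fun _ => norm_nonneg _) (fun ⟨s, r⟩ => ?_)
    ((hU.mul_of_nonneg hV (fun _ => by positivity) (fun _ => by positivity)).mul_left
      (C / (‖Complex.Gamma κ‖ * ‖Complex.Gamma ρ‖)))
  have hnum : ‖b (s, r) * x ^ s * y ^ (Υ * r)‖ ≤
      C * A ^ s * B ^ r * ‖x‖ ^ s * ‖y‖ ^ (Υ * r) := by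
    rw [norm_mul, norm_mul, norm_pow, norm_pow]
    gcongr
    exact hb (s, r)
  have hden := mul_le_mul (norm_Gamma_add_nat_ge hκ s)
    (norm_Gamma_add_nat_mul_ge hρ hΥ r) (by positivity) (norm_nonneg _)
  rw [mlTerm, norm_div, norm_mul (Complex.Gamma _)]
  refine (div_le_div₀ (by positivity) hnum (by positivity) hden).trans_eq ?_
  rw [div_pow, div_pow, mul_pow, mul_pow, ← pow_mul, ← pow_mul]
  field_simp

lemma summable_norm_mlTerm_mlCoeff (γ1 γ2 γ3 γ4 : ℂ) {Υ : ℕ} (hΥ : 0 < Υ) {κ ρ : ℂ}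
    (hκ : 0 < κ.re) (hρ : 0 < ρ.re) (x y : ℂ) :
    Summable fun p => ‖mlTerm (mlCoeff γ1 γ2 γ3 γ4) κ ρ Υ x y p‖ :=
  let ⟨_, _, _, hA, hB, hb⟩ := exists_norm_mlCoeff_le γ1 γ2 γ3 γ4
  summable_norm_mlTerm hA hB hb hΥ hκ hρ x y

lemma mlE4_eq_tsum_mlTerm (γ1 γ2 γ3 γ4 : ℂ) {Υ : ℕ} (hΥ : 0 < Υ) {κ ρ : ℂ}
    (hκ : 0 < κ.re) (hρ : 0 < ρ.re) (X Y : ℂ) :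
    mlE4 κ ρ Υ γ1 γ2 γ3 γ4 X Y = ∑' p, mlTerm (mlCoeff γ1 γ2 γ3 γ4) κ ρ Υ X Y p := by
  rw [(summable_norm_mlTerm_mlCoeff γ1 γ2 γ3 γ4 hΥ hκ hρ X Y).of_norm.tsum_prod,
    mlE4]
  refine tsum_congr fun s => tsum_congr fun r => ?_
  simp only [mlTerm, mlCoeff]
  push_cast
  ring

lemma integral_sub_cpow_mul_cpow {κ μ : ℂ} (hκ : 0 < κ.re) (hμ : 0 < μ.re) {W : ℝ}
    (hW : 0 < W) :
    ∫ t in (0 : ℝ)..W, ((W - t : ℝ) : ℂ) ^ (μ - 1) * (t : ℂ) ^ (κ - 1) =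
      Complex.Gamma μ * Complex.Gamma κ / Complex.Gamma (κ + μ) * (W : ℂ) ^ (κ + μ - 1) := by
  have hB : κ.betaIntegral μ = Complex.Gamma κ * Complex.Gamma μ / Complex.Gamma (κ + μ) := by
    have hκμ : 0 < (κ + μ).re := by simp only [Complex.add_re]; positivity
    rw [eq_div_iff (Complex.Gamma_ne_zero_of_re_pos hκμ),
      Complex.Gamma_mul_Gamma_eq_betaIntegral hκ hμ, mul_comm]
  simp_rw [Complex.ofReal_sub, mul_comm (_ ^ (μ - 1))]
  rw [Complex.betaIntegral_scaled κ μ hW, hB]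
  ring

-- Integrable because its integral, a Beta value, is nonzero.
lemma intervalIntegrable_sub_cpow_mul_cpow {κ μ : ℂ} (hκ : 0 < κ.re) (hμ : 0 < μ.re)
    {W : ℝ} (hW : 0 < W) :
    IntervalIntegrable (fun t : ℝ => ((W - t : ℝ) : ℂ) ^ (μ - 1) * (t : ℂ) ^ (κ - 1))
      volume 0 W := by
  refine intervalIntegral.intervalIntegrable_of_integral_ne_zero ?_
  rw [integral_sub_cpow_mul_cpow hκ hμ hW]
  have hκμ : 0 < (κ + μ).re := by simp only [Complex.add_re]; positivity
  exact mul_ne_zero (div_ne_zero (mul_ne_zero (Complex.Gamma_ne_zero_of_re_pos hμ)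
    (Complex.Gamma_ne_zero_of_re_pos hκ)) (Complex.Gamma_ne_zero_of_re_pos hκμ))
    (Complex.cpow_ne_zero_iff.2 (Or.inl (Complex.ofReal_ne_zero.2 hW.ne')))

lemma integral_sub_cpow_mul_cpow_mul_pow {κ μ : ℂ} (hκ : 0 < κ.re) (hμ : 0 < μ.re) {W : ℝ}
    (hW : 0 < W) (n : ℕ) :
    ∫ t in (0 : ℝ)..W, ((W - t : ℝ) : ℂ) ^ (μ - 1) * (t : ℂ) ^ (κ - 1) * (t : ℂ) ^ n =
      Complex.Gamma μ * (W : ℂ) ^ (κ + μ - 1) *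
        (Complex.Gamma (κ + n) / Complex.Gamma (κ + μ + n) * (W : ℂ) ^ n) := by
  have hκn : 0 < (κ + n).re := by simp only [Complex.add_re, Complex.natCast_re]; positivity
  have hshift : ∀ t ∈ Ι (0 : ℝ) W,
      ((W - t : ℝ) : ℂ) ^ (μ - 1) * (t : ℂ) ^ (κ - 1) * (t : ℂ) ^ n =
        ((W - t : ℝ) : ℂ) ^ (μ - 1) * (t : ℂ) ^ (κ + n - 1) := by
    intro t ht
    rw [Set.uIoc_of_le hW.le] at ht
    rw [show κ + n - 1 = κ - 1 + n by ring,
      Complex.cpow_add _ _ (Complex.ofReal_ne_zero.2 ht.1.ne'), Complex.cpow_natCast, mul_assoc]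
  rw [intervalIntegral.integral_congr_ae (.of_forall hshift),
    integral_sub_cpow_mul_cpow hκn hμ hW, show κ + n + μ - 1 = κ + μ - 1 + n by ring,
    Complex.cpow_add _ _ (Complex.ofReal_ne_zero.2 hW.ne'), Complex.cpow_natCast,
    show κ + n + μ = κ + μ + n by ring]
  ring

lemma integral_sub_cpow_mul_cpow_mul_tsum {ι : Type*} [Countable ι] {κ μ : ℂ}
    (hκ : 0 < κ.re) (hμ : 0 < μ.re) {W : ℝ} (hW : 0 < W) {n : ι → ℕ} {c : ι → ℂ}
    (hc : Summable fun i => ‖c i‖ * W ^ n i) :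
    ∫ t in (0 : ℝ)..W,
        ((W - t : ℝ) : ℂ) ^ (μ - 1) * ((t : ℂ) ^ (κ - 1) * ∑' i, c i * (t : ℂ) ^ n i) =
      Complex.Gamma μ * (W : ℂ) ^ (κ + μ - 1) *
        ∑' i, c i * (Complex.Gamma (κ + n i) / Complex.Gamma (κ + μ + n i)) *
          (W : ℂ) ^ n i := by
  set K : ℝ → ℂ := fun t => ((W - t : ℝ) : ℂ) ^ (μ - 1) * (t : ℂ) ^ (κ - 1) with hK_def
  have hK : IntervalIntegrable K volume 0 W := intervalIntegrable_sub_cpow_mul_cpow hκ hμ hW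
  have hnorm_le : ∀ i, ∀ t ∈ Ι (0 : ℝ) W, ‖c i * (t : ℂ) ^ n i‖ ≤ ‖c i‖ * W ^ n i := by
    intro i t ht
    rw [Set.uIoc_of_le hW.le] at ht
    rw [norm_mul, norm_pow, Complex.norm_real, Real.norm_of_nonneg ht.1.le]
    exact mul_le_mul_of_nonneg_left (pow_le_pow_left₀ ht.1.le ht.2 _) (norm_nonneg _)
  have hsum := intervalIntegral.hasSum_integral_of_dominated_convergence
    (F := fun i t => c i * (t : ℂ) ^ n i * K t)
    (f := fun t =>
      ((W - t : ℝ) : ℂ) ^ (μ - 1) * ((t : ℂ) ^ (κ - 1) * ∑' i, c i * (t : ℂ) ^ n i))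
    (fun i t => ‖c i‖ * W ^ n i * ‖K t‖)
    (fun i =>
      (Continuous.aestronglyMeasurable (by fun_prop)).mul hK.def'.aestronglyMeasurable)
    (fun i => .of_forall fun t ht => by
      rw [norm_mul]
      gcongr
      exact hnorm_le i t ht)
    (.of_forall fun t _ => hc.mul_right _)
    (by simpa only [tsum_mul_right] using hK.norm.const_mul _)
    (.of_forall fun t ht => by
      have hs : Summable fun i => c i * (t : ℂ) ^ n i :=
        .of_norm_bounded hc (hnorm_le · t ht)
      have hf :
          ((W - t : ℝ) : ℂ) ^ (μ - 1) * ((t : ℂ) ^ (κ - 1) * ∑' i, c i * (t : ℂ) ^ n i) =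
            (∑' i, c i * (t : ℂ) ^ n i) * K t := by
        rw [hK_def]
        ring
      exact hf ▸ hs.hasSum.mul_right (K t))
  rw [← hsum.tsum_eq, ← tsum_mul_left]
  refine tsum_congr fun i => ?_
  calc ∫ t in (0 : ℝ)..W, c i * (t : ℂ) ^ n i * K t
      = c i * ∫ t in (0 : ℝ)..W, K t * (t : ℂ) ^ n i := by
        rw [← intervalIntegral.integral_const_mul]
        congr 1 with t
        ring
    _ = _ := by
        simp only [hK_def]
        rw [integral_sub_cpow_mul_cpow_mul_pow hκ hμ hW]
        ring

lemma intervalIntegral_eq_integral_zero_sub_add {E : Type*} [NormedAddCommGroup E]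
    [NormedSpace ℝ E] (f : ℝ → E) (a b : ℝ) :
    ∫ x in a..b, f x = ∫ t in (0 : ℝ)..b - a, f (a + t) := by
  simp

lemma integral_sub_cpow_mul_sub_cpow_mul_tsum {ι : Type*} [Countable ι] {κ μ : ℂ}
    (hκ : 0 < κ.re) (hμ : 0 < μ.re) {a x : ℝ} (hax : a < x) {n : ι → ℕ} {c : ι → ℂ}
    (hc : Summable fun i => ‖c i‖ * (x - a) ^ n i) :
    ∫ t in a..x, ((x - t : ℝ) : ℂ) ^ (μ - 1) *
        (((t - a : ℝ) : ℂ) ^ (κ - 1) * ∑' i, c i * ((t : ℂ) - a) ^ n i) =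
      Complex.Gamma μ * ((x - a : ℝ) : ℂ) ^ (κ + μ - 1) *
        ∑' i, c i * (Complex.Gamma (κ + n i) / Complex.Gamma (κ + μ + n i)) *
          ((x : ℂ) - a) ^ n i := by
  rw [intervalIntegral_eq_integral_zero_sub_add]
  simp only [sub_add_eq_sub_sub, add_sub_cancel_left, Complex.ofReal_add]
  rw [integral_sub_cpow_mul_cpow_mul_tsum hκ hμ (sub_pos.2 hax) hc, Complex.ofReal_sub]

lemma norm_ofReal_sub_ofReal {a x : ℝ} (hax : a ≤ x) : ‖(x : ℂ) - a‖ = x - a := by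
  rw [← Complex.ofReal_sub, Complex.norm_real, Real.norm_of_nonneg (sub_nonneg.2 hax)]

lemma integral_sub_cpow_mul_sub_cpow_mul_tsum_mlTerm_fst {b : ℕ × ℕ → ℂ} {κ μ : ℂ}
    (hκ : 0 < κ.re) (hμ : 0 < μ.re) (ρ : ℂ) (Υ : ℕ) {a x : ℝ} (hax : a < x) (ϖ : ℂ)
    (hb : ∀ x y, Summable fun p => ‖mlTerm b κ ρ Υ x y p‖) (y : ℂ) :
    ∫ t in a..x, ((x - t : ℝ) : ℂ) ^ (μ - 1) *
        (((t - a : ℝ) : ℂ) ^ (κ - 1) * ∑' p, mlTerm b κ ρ Υ (ϖ * ((t : ℂ) - a)) y p) =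
      Complex.Gamma μ * ((x - a : ℝ) : ℂ) ^ (κ + μ - 1) *
        ∑' p, mlTerm b (κ + μ) ρ Υ (ϖ * ((x : ℂ) - a)) y p := by
  have key := integral_sub_cpow_mul_sub_cpow_mul_tsum hκ hμ hax (n := Prod.fst)
    (c := fun p => b p * ϖ ^ p.1 * y ^ (Υ * p.2) /
      (Complex.Gamma (κ + p.1) * Complex.Gamma (ρ + ↑(Υ * p.2))))
    ((hb (ϖ * ((x : ℂ) - a)) y).congr fun p => by
      simp only [mlTerm, norm_div, norm_mul, norm_pow, mul_pow, norm_ofReal_sub_ofReal hax.le]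
      ring)
  simp only [mlTerm, mul_pow]
  convert key using 7 with t p p
  · ring
  · have := Complex.Gamma_ne_zero_of_re_pos (s := κ + p.1)
      (by simp only [Complex.add_re, Complex.natCast_re]; positivity)
    field_simp

lemma integral_sub_cpow_mul_sub_cpow_mul_tsum_mlTerm_snd {b : ℕ × ℕ → ℂ} (κ : ℂ) {ρ ζ : ℂ}
    (hρ : 0 < ρ.re) (hζ : 0 < ζ.re) (Υ : ℕ) {a x : ℝ} (hax : a < x) (ϖ : ℂ)
    (hb : ∀ x y, Summable fun p => ‖mlTerm b κ ρ Υ x y p‖) (z : ℂ) :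
    ∫ t in a..x, ((x - t : ℝ) : ℂ) ^ (ζ - 1) *
        (((t - a : ℝ) : ℂ) ^ (ρ - 1) * ∑' p, mlTerm b κ ρ Υ z (ϖ * ((t : ℂ) - a)) p) =
      Complex.Gamma ζ * ((x - a : ℝ) : ℂ) ^ (ρ + ζ - 1) *
        ∑' p, mlTerm b κ (ρ + ζ) Υ z (ϖ * ((x : ℂ) - a)) p := by
  have key := integral_sub_cpow_mul_sub_cpow_mul_tsum hρ hζ hax (n := fun p => Υ * p.2)
    (c := fun p => b p * z ^ p.1 * ϖ ^ (Υ * p.2) /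
      (Complex.Gamma (κ + p.1) * Complex.Gamma (ρ + ↑(Υ * p.2))))
    ((hb z (ϖ * ((x : ℂ) - a))).congr fun p => by
      simp only [mlTerm, norm_div, norm_mul, norm_pow, mul_pow, norm_ofReal_sub_ofReal hax.le]
      ring)
  simp only [mlTerm, mul_pow]
  convert key using 7 with t p p
  · ring
  · have := Complex.Gamma_ne_zero_of_re_pos (s := ρ + ↑(Υ * p.2))
      (by simp only [Complex.add_re, Complex.natCast_re]; positivity)
    field_simp

/-- Double Riemann–Liouville fractional integral image of the modified bivariate
H-K Mittag-Leffler function. -/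
theorem double_riemannLiouville_integral_mlE4 (κ ρ μ ζ γ1 γ2 γ3 γ4 ϖ1 ϖ2 : ℂ) (Υ : ℕ)
    (hΥ : 0 < Υ) (hμ : 0 < μ.re) (hζ : 0 < ζ.re) (hκ : 0 < κ.re) (hρ : 0 < ρ.re)
    (A B X Y : ℝ) (hX : A < X) (hY : B < Y) :
    (1 / (Complex.Gamma ζ * Complex.Gamma μ)) *
        (∫ Ω in B..Y, ∫ ε in A..X,
          ((X - ε : ℝ) : ℂ) ^ (μ - 1) * ((Y - Ω : ℝ) : ℂ) ^ (ζ - 1) *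
            (((ε - A : ℝ) : ℂ) ^ (κ - 1) * ((Ω - B : ℝ) : ℂ) ^ (ρ - 1) *
              mlE4 κ ρ Υ γ1 γ2 γ3 γ4 (ϖ1 * ((ε : ℂ) - A)) (ϖ2 * ((Ω : ℂ) - B)))) =
      ((X - A : ℝ) : ℂ) ^ (κ + μ - 1) * ((Y - B : ℝ) : ℂ) ^ (ρ + ζ - 1) *
        mlE4 (κ + μ) (ρ + ζ) Υ γ1 γ2 γ3 γ4 (ϖ1 * ((X : ℂ) - A)) (ϖ2 * ((Y : ℂ) - B)) := by
  have hκμ : 0 < (κ + μ).re := by simp only [Complex.add_re]; positivity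
  have hρζ : 0 < (ρ + ζ).re := by simp only [Complex.add_re]; positivity
  set b := mlCoeff γ1 γ2 γ3 γ4
  calc _ = 1 / (Complex.Gamma ζ * Complex.Gamma μ) * ∫ Ω in B..Y,
        ((Y - Ω : ℝ) : ℂ) ^ (ζ - 1) * ((Ω - B : ℝ) : ℂ) ^ (ρ - 1) *
          ∫ ε in A..X, ((X - ε : ℝ) : ℂ) ^ (μ - 1) * (((ε - A : ℝ) : ℂ) ^ (κ - 1) *
            ∑' p, mlTerm b κ ρ Υ (ϖ1 * ((ε : ℂ) - A)) (ϖ2 * ((Ω : ℂ) - B)) p) := by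
        simp_rw [← intervalIntegral.integral_const_mul,
          mlE4_eq_tsum_mlTerm γ1 γ2 γ3 γ4 hΥ hκ hρ]
        congr 1 with Ω
        congr 1 with ε
        ring
    _ = 1 / (Complex.Gamma ζ * Complex.Gamma μ) *
        (Complex.Gamma μ * ((X - A : ℝ) : ℂ) ^ (κ + μ - 1) *
          ∫ Ω in B..Y, ((Y - Ω : ℝ) : ℂ) ^ (ζ - 1) * (((Ω - B : ℝ) : ℂ) ^ (ρ - 1) *
            ∑' p, mlTerm b (κ + μ) ρ Υ (ϖ1 * ((X : ℂ) - A)) (ϖ2 * ((Ω : ℂ) - B)) p)) := by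
        simp_rw [integral_sub_cpow_mul_sub_cpow_mul_tsum_mlTerm_fst (b := b) hκ hμ ρ Υ hX ϖ1
            (summable_norm_mlTerm_mlCoeff γ1 γ2 γ3 γ4 hΥ hκ hρ),
          ← intervalIntegral.integral_const_mul]
        congr 2 with Ω
        ring
    _ = _ := by
      rw [integral_sub_cpow_mul_sub_cpow_mul_tsum_mlTerm_snd _ hρ hζ Υ hY ϖ2
        (summable_norm_mlTerm_mlCoeff γ1 γ2 γ3 γ4 hΥ hκμ hρ),
        mlE4_eq_tsum_mlTerm γ1 γ2 γ3 γ4 hΥ hκμ hρζ]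
      have := Complex.Gamma_ne_zero_of_re_pos hμ
      have := Complex.Gamma_ne_zero_of_re_pos hζ
      field_simp
end
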